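/- arXiv:2104.10281 — 9 statements merged into one kernel-verified Lean document; each statement's English description precedes it below -/
import Mathlib

section
/- Let θ₀ < θ₁, h₁, c₁, h₂, c₂ ≥ 0 with c₂ + h₂ > 0, θ₁ + h₁ - c₁ > 0 and 0 ≤ a₁ < 2/3. Define q*(A,B) = (θ₁ + h₁ - B)/(A(1-a₁) + h₂) when the denominator is positive, and the profit π(A,B) = (1/(θ₁-θ₀))∫₀^{q*} (Aq + B - c₁ - c₂q)(θ₁ + h₁ - B - (h₂ + (1-a₁)A)q) dq. Then the pair A* = ((1-a₁)c₂ + (3a₁-1)h₂)/((1-a₁)(2-3a₁)), B* = ((1-2a₁)(θ₁+h₁) + (1-a₁)c₁)/(2-3a₁) satisfies the first-order conditions ∂π/∂A = ∂π/∂B = 0, and π(A*,B*) = (1-a₁)²(θ₁+h₁-c₁)³ / (6(θ₁-θ₀)(2-3a₁)[(1-a₁)c₂ + h₂]) > 0. -/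
/-- Closed form for the profit integral. -/
lemma integ_helper (a b K D : ℝ) (hD : D ≠ 0) :
    (∫ q in (0:ℝ)..K/D, (a*q+b)*(K-D*q)) = a*K^3/(6*D^2) + b*K^2/(2*D) := by
  have h : ∀ T : ℝ, (∫ q in (0:ℝ)..T, (a*q+b)*(K-D*q))
      = a*K*T^2/2 + b*K*T - a*D*T^3/3 - b*D*T^2/2 := by
    intro T
    have hder : ∀ q ∈ Set.uIcc (0:ℝ) T,
        HasDerivAt (fun q => a*K*q^2/2 + b*K*q - a*D*q^3/3 - b*D*q^2/2)
          ((a*q+b)*(K-D*q)) q := by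
      intro q _
      have t1 := ((hasDerivAt_pow 2 q).const_mul (a*K)).div_const 2
      have t2 := (hasDerivAt_id q).const_mul (b*K)
      have t3 := ((hasDerivAt_pow 3 q).const_mul (a*D)).div_const 3
      have t4 := ((hasDerivAt_pow 2 q).const_mul (b*D)).div_const 2
      have := ((t1.add t2).sub t3).sub t4
      refine this.congr_deriv ?_
      push_cast; ring
    have hint : IntervalIntegrable (fun q : ℝ => (a*q+b)*(K-D*q))
        MeasureTheory.volume 0 T := by
      apply Continuous.intervalIntegrable; fun_prop
    rw [intervalIntegral.integral_eq_sub_of_hasDerivAt hder hint]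
    ring
  rw [h (K/D)]
  field_simp
  ring

set_option maxHeartbeats 1600000 in
/-- The candidate pair `(A*, B*)` satisfies the first-order conditions of the
monopolist's profit over quadratic price schemes, and yields the stated
strictly positive profit. -/
theorem stmt_3 (θ₀ θ₁ h₁ c₁ h₂ c₂ a₁ : ℝ)
    (hθ : θ₀ < θ₁) (hh₁ : 0 ≤ h₁) (hc₁ : 0 ≤ c₁) (hh₂ : 0 ≤ h₂) (hc₂ : 0 ≤ c₂)
    (hsum : 0 < c₂ + h₂) (hval : 0 < θ₁ + h₁ - c₁) (ha₁ : 0 ≤ a₁) (ha₁' : a₁ < 2/3)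
    (π : ℝ → ℝ → ℝ)
    (hπ : ∀ A B, 0 < A * (1 - a₁) + h₂ →
      π A B = (1 / (θ₁ - θ₀)) *
        ∫ q in (0:ℝ)..((θ₁ + h₁ - B) / (A * (1 - a₁) + h₂)),
          (A * q + B - c₁ - c₂ * q) * (θ₁ + h₁ - B - (h₂ + (1 - a₁) * A) * q)) :
    HasDerivAt (fun A => π A (((1 - 2*a₁)*(θ₁+h₁) + (1-a₁)*c₁)/(2 - 3*a₁))) 0
      (((1-a₁)*c₂ + (3*a₁-1)*h₂)/((1-a₁)*(2-3*a₁))) ∧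
    HasDerivAt (fun B => π (((1-a₁)*c₂ + (3*a₁-1)*h₂)/((1-a₁)*(2-3*a₁))) B) 0
      (((1 - 2*a₁)*(θ₁+h₁) + (1-a₁)*c₁)/(2 - 3*a₁)) ∧
    π (((1-a₁)*c₂ + (3*a₁-1)*h₂)/((1-a₁)*(2-3*a₁)))
      (((1 - 2*a₁)*(θ₁+h₁) + (1-a₁)*c₁)/(2 - 3*a₁))
      = (1-a₁)^2*(θ₁+h₁-c₁)^3 / (6*(θ₁-θ₀)*(2-3*a₁)*((1-a₁)*c₂+h₂)) ∧
    0 < (1-a₁)^2*(θ₁+h₁-c₁)^3 / (6*(θ₁-θ₀)*(2-3*a₁)*((1-a₁)*c₂+h₂)) := by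
  have h1a : 0 < 1 - a₁ := by linarith
  have h23 : 0 < 2 - 3*a₁ := by linarith
  have hθd : 0 < θ₁ - θ₀ := by linarith
  have hE : 0 < (1-a₁)*c₂ + h₂ := by
    nlinarith [mul_pos h1a hsum, mul_nonneg ha₁ hh₂]
  set A₀ : ℝ := ((1-a₁)*c₂ + (3*a₁-1)*h₂)/((1-a₁)*(2-3*a₁)) with hA₀
  set B₀ : ℝ := ((1 - 2*a₁)*(θ₁+h₁) + (1-a₁)*c₁)/(2 - 3*a₁) with hB₀
  have hDeq : A₀*(1-a₁)+h₂ = ((1-a₁)*c₂+h₂)/(2-3*a₁) := by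
    rw [hA₀]; field_simp [show (2:ℝ) - a₁*3 ≠ 0 by linarith]; ring
  have hKeq : θ₁ + h₁ - B₀ = (1-a₁)*(θ₁+h₁-c₁)/(2-3*a₁) := by
    rw [hB₀]; field_simp [show (2:ℝ) - a₁*3 ≠ 0 by linarith]; ring
  have hAc : A₀ - c₂ = (3*a₁-1)*((1-a₁)*c₂+h₂)/((1-a₁)*(2-3*a₁)) := by
    rw [hA₀]; field_simp [show (2:ℝ) - a₁*3 ≠ 0 by linarith]; ring
  have hBc : B₀ - c₁ = (1-2*a₁)*(θ₁+h₁-c₁)/(2-3*a₁) := by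
    rw [hB₀]; field_simp [show (2:ℝ) - a₁*3 ≠ 0 by linarith]; ring
  clear_value A₀ B₀
  clear hA₀ hB₀
  have hDstar : 0 < A₀ * (1 - a₁) + h₂ := by
    rw [hDeq]; positivity
  -- closed form for π
  have hπF : ∀ A B, 0 < A * (1 - a₁) + h₂ →
      π A B = (1 / (θ₁ - θ₀)) *
        ((A - c₂)*(θ₁+h₁-B)^3/(6*(A*(1-a₁)+h₂)^2)
          + (B - c₁)*(θ₁+h₁-B)^2/(2*(A*(1-a₁)+h₂))) := by
    intro A B hD
    rw [hπ A B hD]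
    have hcong : (∫ q in (0:ℝ)..((θ₁+h₁-B)/(A*(1-a₁)+h₂)),
          (A*q+B-c₁-c₂*q)*(θ₁+h₁-B-(h₂+(1-a₁)*A)*q))
        = ∫ q in (0:ℝ)..((θ₁+h₁-B)/(A*(1-a₁)+h₂)),
          ((A-c₂)*q+(B-c₁))*((θ₁+h₁-B)-(A*(1-a₁)+h₂)*q) := by
      apply intervalIntegral.integral_congr
      intro q _; dsimp only; ring
    rw [hcong, integ_helper _ _ _ _ (ne_of_gt hD)]
  refine ⟨?_, ?_, ?_, ?_⟩
  · -- derivative in A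
    have heq : (fun A => π A B₀) =ᶠ[nhds A₀]
        (fun A => (1 / (θ₁ - θ₀)) *
          ((A - c₂)*(θ₁+h₁-B₀)^3/(6*(A*(1-a₁)+h₂)^2)
            + (B₀ - c₁)*(θ₁+h₁-B₀)^2/(2*(A*(1-a₁)+h₂)))) := by
      have hopen : IsOpen {A : ℝ | 0 < A*(1-a₁)+h₂} :=
        isOpen_lt continuous_const (by fun_prop)
      filter_upwards [hopen.mem_nhds hDstar] with A hA
      exact hπF A B₀ hA
    refine HasDerivAt.congr_of_eventuallyEq ?_ heq
    have hDd : HasDerivAt (fun A : ℝ => A*(1-a₁)+h₂) (1-a₁) A₀ := by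
      simpa using ((hasDerivAt_id A₀).mul_const (1-a₁)).add_const h₂
    have h1 : HasDerivAt (fun A : ℝ => (A-c₂)*(θ₁+h₁-B₀)^3) ((θ₁+h₁-B₀)^3) A₀ := by
      simpa using ((hasDerivAt_id A₀).sub_const c₂).mul_const ((θ₁+h₁-B₀)^3)
    have h2 := (hDd.pow 2).const_mul (6:ℝ)
    have h3 := hDd.const_mul (2:ℝ)
    have hden2 : (6:ℝ)*(A₀*(1-a₁)+h₂)^2 ≠ 0 := by positivity
    have hden1 : (2:ℝ)*(A₀*(1-a₁)+h₂) ≠ 0 := by positivity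
    have hF := ((h1.div h2 hden2).add
      ((hasDerivAt_const A₀ ((B₀-c₁)*(θ₁+h₁-B₀)^2)).div h3 hden1)).const_mul
      (1/(θ₁-θ₀))
    refine hF.congr_deriv ?_
    try simp only [id_eq, Pi.pow_apply]
    push_cast
    rw [hKeq, hAc, hBc, hDeq]
    field_simp [show (2:ℝ) - a₁*3 ≠ 0 by linarith]
    ring
  · -- derivative in B
    have heq : (fun B => π A₀ B) = (fun B => (1 / (θ₁ - θ₀)) *
        ((A₀ - c₂)*(θ₁+h₁-B)^3/(6*(A₀*(1-a₁)+h₂)^2)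
          + (B - c₁)*(θ₁+h₁-B)^2/(2*(A₀*(1-a₁)+h₂)))) :=
      funext fun B => hπF A₀ B hDstar
    rw [heq]
    have hK : HasDerivAt (fun B : ℝ => θ₁+h₁-B) (-1) B₀ := by
      simpa using (hasDerivAt_id B₀).const_sub (θ₁+h₁)
    have hF := ((((hK.pow 3).const_mul (A₀-c₂)).div_const (6*(A₀*(1-a₁)+h₂)^2)).add
      ((((hasDerivAt_id B₀).sub_const c₁).mul (hK.pow 2)).div_const
        (2*(A₀*(1-a₁)+h₂)))).const_mul (1/(θ₁-θ₀))
    refine hF.congr_deriv ?_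
    try simp only [id_eq, Pi.pow_apply]
    push_cast
    rw [hKeq, hAc, hBc, hDeq]
    field_simp
    ring
  · rw [hπF A₀ B₀ hDstar, hKeq, hAc, hBc, hDeq]
    field_simp
    ring
  · have hnum : 0 < (1-a₁)^2*(θ₁+h₁-c₁)^3 :=
      mul_pos (pow_pos h1a 2) (pow_pos hval 3)
    have hden : 0 < 6*(θ₁-θ₀)*(2-3*a₁)*((1-a₁)*c₂+h₂) := by positivity
    exact div_pos hnum hden
end

section
/- Let θ₀ < θ₁, h₁, c₁, h₂, c₂ ≥ 0 with c₂ + h₂ > 0, θ₁+h₁-c₁ > 0, and 0 ≤ a₁ < 1. Define the welfare of the quadratic scheme P_{A,B}(q)=(A/2)q²+Bq as W(A,B) = (1/(θ₁-θ₀))∫₀^{q*} ([2(1-a₁)A + h₂ - c₂]q + B - c₁)(θ₁ + h₁ - h₂q - A(1-a₁)q - B) dq with q* = (θ₁+h₁-B)/(A(1-a₁)+h₂) when positive. Then the pair A = c₂/(1-a₁), B = c₁ satisfies the first-order conditions and yields welfare W = (θ₁+h₁-c₁)³/(6(θ₁-θ₀)(c₂+h₂)) > 0; in particular this maximal welfare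 does not depend on a₁. -/
lemma integ (m b s k T : ℝ) :
    (∫ q in (0:ℝ)..T, (m*q+b)*(s-k*q))
      = -(m*k)*T^3/3 + (m*s-b*k)*T^2/2 + b*s*T := by
  have h : (∫ q in (0:ℝ)..T, (m*q+b)*(s-k*q))
      = ∫ q in (0:ℝ)..T, (-(m*k)*q^2 + ((m*s-b*k)*q + b*s)) :=
    intervalIntegral.integral_congr (fun q _ => by ring)
  rw [h, intervalIntegral.integral_add, intervalIntegral.integral_add,
    intervalIntegral.integral_const_mul, intervalIntegral.integral_const_mul,
    integral_pow, integral_id, intervalIntegral.integral_const]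
  · norm_num; ring
  all_goals apply Continuous.intervalIntegrable; fun_prop

/-- The pair `A = c₂/(1-a₁)`, `B = c₁` satisfies the first-order conditions
for welfare maximization over quadratic price schemes and yields welfare
`(θ₁+h₁-c₁)³/(6(θ₁-θ₀)(c₂+h₂)) > 0`, which does not depend on `a₁`. -/
theorem stmt_5 (θ₀ θ₁ h₁ c₁ h₂ c₂ a₁ : ℝ)
    (hθ : θ₀ < θ₁) (hh₁ : 0 ≤ h₁) (hc₁ : 0 ≤ c₁) (hh₂ : 0 ≤ h₂) (hc₂ : 0 ≤ c₂)
    (hsum : 0 < c₂ + h₂) (hval : 0 < θ₁ + h₁ - c₁) (ha₁ : 0 ≤ a₁) (ha₁' : a₁ < 1)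
    (W : ℝ → ℝ → ℝ)
    (hW : ∀ A B, 0 < A * (1 - a₁) + h₂ →
      W A B = (1 / (θ₁ - θ₀)) *
        ∫ q in (0:ℝ)..((θ₁ + h₁ - B) / (A * (1 - a₁) + h₂)),
          ((2*(1-a₁)*A + h₂ - c₂) * q + B - c₁) * (θ₁ + h₁ - h₂*q - A*(1-a₁)*q - B)) :
    HasDerivAt (fun A => W A c₁) 0 (c₂/(1-a₁)) ∧
    HasDerivAt (fun B => W (c₂/(1-a₁)) B) 0 c₁ ∧
    W (c₂/(1-a₁)) c₁ = (θ₁+h₁-c₁)^3 / (6*(θ₁-θ₀)*(c₂+h₂)) ∧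
    0 < (θ₁+h₁-c₁)^3 / (6*(θ₁-θ₀)*(c₂+h₂)) := by
  have ha : (0:ℝ) < 1 - a₁ := by linarith
  have ha0 : (1 - a₁) ≠ 0 := ne_of_gt ha
  have hθ' : θ₁ - θ₀ ≠ 0 := by linarith
  have hAstar : (c₂/(1-a₁)) * (1 - a₁) = c₂ := div_mul_cancel₀ _ ha0
  have hd : c₂ + h₂ ≠ 0 := ne_of_gt hsum
  set s : ℝ := θ₁ + h₁ - c₁ with hs
  set d : ℝ := c₂ + h₂ with hdd
  -- reduction of W to closed form
  have key : ∀ A B, 0 < A * (1 - a₁) + h₂ →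
      W A B = (1/(θ₁-θ₀)) * ((2*(A*(1-a₁)+h₂) - h₂ - c₂) * (θ₁+h₁-B)^3 / (6*(A*(1-a₁)+h₂)^2)
        + (B-c₁) * (θ₁+h₁-B)^2 / (2*(A*(1-a₁)+h₂))) := by
    intro A B hk
    have hkne : A*(1-a₁)+h₂ ≠ 0 := ne_of_gt hk
    have hi : (∫ q in (0:ℝ)..((θ₁ + h₁ - B) / (A * (1 - a₁) + h₂)),
          ((2*(1-a₁)*A + h₂ - c₂) * q + B - c₁) * (θ₁ + h₁ - h₂*q - A*(1-a₁)*q - B))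
        = ∫ q in (0:ℝ)..((θ₁ + h₁ - B) / (A * (1 - a₁) + h₂)),
          ((2*(1-a₁)*A + h₂ - c₂)*q + (B - c₁)) * ((θ₁+h₁-B) - (A*(1-a₁)+h₂)*q) :=
      intervalIntegral.integral_congr (fun q _ => by ring)
    rw [hW A B hk, hi, integ]
    field_simp
    ring
  -- closed form in A (B = c₁)
  set G : ℝ → ℝ := fun A =>
    (1/(θ₁-θ₀)) * ((2*(A*(1-a₁)+h₂) - h₂ - c₂) * s^3 / (6*(A*(1-a₁)+h₂)^2)
      + (c₁-c₁) * s^2 / (2*(A*(1-a₁)+h₂))) with hG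
  have hkstar : (c₂/(1-a₁)) * (1-a₁) + h₂ = d := by rw [hAstar]
  have hdpos : (0:ℝ) < d := hsum
  -- eventual equality near A*
  have hev : (fun A => W A c₁) =ᶠ[nhds (c₂/(1-a₁))] G := by
    have hc : ContinuousAt (fun A : ℝ => A*(1-a₁)+h₂) (c₂/(1-a₁)) := by fun_prop
    have hmem : ∀ᶠ A in nhds (c₂/(1-a₁)), (fun A : ℝ => A*(1-a₁)+h₂) A ∈ Set.Ioi (0:ℝ) := by
      apply hc.eventually_mem
      apply isOpen_Ioi.mem_nhds
      simp only [Set.mem_Ioi]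
      rw [hkstar]; exact hdpos
    filter_upwards [hmem] with A hA
    exact key A c₁ hA
  -- derivative of G at A*
  have hk' : HasDerivAt (fun A : ℝ => A*(1-a₁)+h₂) (1-a₁) (c₂/(1-a₁)) := by
    simpa using ((hasDerivAt_id (c₂/(1-a₁))).mul_const (1-a₁)).add_const h₂
  have hGd : HasDerivAt G 0 (c₂/(1-a₁)) := by
    have h1 : HasDerivAt (fun A : ℝ => (2*(A*(1-a₁)+h₂) - h₂ - c₂) * s^3)
        (2*(1-a₁)*s^3) (c₂/(1-a₁)) := by
      have := ((hk'.const_mul 2).sub_const h₂).sub_const c₂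
      simpa [mul_comm] using this.mul_const (s^3)
    have h2 : HasDerivAt (fun A : ℝ => 6*(A*(1-a₁)+h₂)^2)
        (6*(2*((c₂/(1-a₁))*(1-a₁)+h₂)*(1-a₁))) (c₂/(1-a₁)) := by
      simpa [mul_comm, mul_assoc] using ((hk'.pow 2).const_mul 6)
    have h3 := h1.div h2 (by rw [hkstar]; positivity)
    have h4 : HasDerivAt (fun A : ℝ => (c₁-c₁) * s^2 / (2*(A*(1-a₁)+h₂)))
        0 (c₂/(1-a₁)) := by
      have : (fun A : ℝ => (c₁-c₁) * s^2 / (2*(A*(1-a₁)+h₂))) = fun _ => 0 := by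
        funext A; simp
      rw [this]; exact hasDerivAt_const _ _
    have h5 := (h3.add h4).const_mul (1/(θ₁-θ₀))
    convert h5 using 1
    case e'_4 => rfl
    case e'_5 => rfl
    case e'_8 => rfl
    rw [hkstar]
    have : (2*d - h₂ - c₂) = d := by rw [hdd]; ring
    rw [this]
    field_simp
    ring
  have part1 : HasDerivAt (fun A => W A c₁) 0 (c₂/(1-a₁)) := hGd.congr_of_eventuallyEq hev
  -- part 2 : derivative in B
  have hkposB : 0 < (c₂/(1-a₁)) * (1 - a₁) + h₂ := by rw [hkstar]; exact hdpos
  set H : ℝ → ℝ := fun B =>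
    (1/(θ₁-θ₀)) * ((2*d - h₂ - c₂) * (θ₁+h₁-B)^3 / (6*d^2)
      + (B-c₁) * (θ₁+h₁-B)^2 / (2*d)) with hH
  have hevB : (fun B => W (c₂/(1-a₁)) B) =ᶠ[nhds c₁] H := by
    apply Filter.Eventually.of_forall
    intro B
    show W (c₂/(1-a₁)) B = H B
    rw [key (c₂/(1-a₁)) B hkposB, hkstar]
  have hsB : HasDerivAt (fun B : ℝ => θ₁+h₁-B) (-1) c₁ := by
    simpa using (hasDerivAt_id c₁).const_sub (θ₁+h₁)
  have hHd : HasDerivAt H 0 c₁ := by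
    have h1 := ((hsB.pow 3).const_mul (2*d-h₂-c₂)).div_const (6*d^2)
    have h2 := (((hasDerivAt_id c₁).sub_const c₁).mul (hsB.pow 2)).div_const (2*d)
    have h5 := (h1.add h2).const_mul (1/(θ₁-θ₀))
    convert h5 using 1
    case e'_4 => rfl
    case e'_5 => rfl
    case e'_8 => rfl
    simp only [hdd, id, Pi.pow_apply]
    push_cast
    field_simp
    ring
  have part2 : HasDerivAt (fun B => W (c₂/(1-a₁)) B) 0 c₁ := hHd.congr_of_eventuallyEq hevB
  -- part 3
  have part3 : W (c₂/(1-a₁)) c₁ = s^3 / (6*(θ₁-θ₀)*d) := by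
    rw [key (c₂/(1-a₁)) c₁ hkposB, hkstar]
    have : (2*d - h₂ - c₂) = d := by rw [hdd]; ring
    rw [this]
    field_simp
    ring
  refine ⟨part1, part2, part3, ?_⟩
  apply div_pos (pow_pos hval 3)
  have : (0:ℝ) < θ₁ - θ₀ := by linarith
  positivity
end

section
/- Under the hypotheses of the monopolist's problem (h₁,c₁,h₂,c₂ ≥ 0, c₂+h₂>0, θ₁+h₁-c₁>0, a₁<2/3), the maximum profit and maximum welfare over quadratic price schemes satisfy max π = [(1-a₁)²(c₂+h₂) / ((2-3a₁)((1-a₁)c₂ + h₂))] · max W. -/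
/-- Relation between maximal profit and maximal welfare over quadratic price
schemes: `max π = [(1-a₁)²(c₂+h₂)/((2-3a₁)((1-a₁)c₂+h₂))] · max W`. -/
theorem stmt_6 (θ₀ θ₁ h₁ c₁ h₂ c₂ a₁ : ℝ)
    (hθ : θ₀ < θ₁) (hh₁ : 0 ≤ h₁) (hc₁ : 0 ≤ c₁) (hh₂ : 0 ≤ h₂) (hc₂ : 0 ≤ c₂)
    (hsum : 0 < c₂ + h₂) (hval : 0 < θ₁ + h₁ - c₁) (ha₁ : 0 ≤ a₁) (ha₁' : a₁ < 2/3) :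
    (1-a₁)^2*(θ₁+h₁-c₁)^3 / (6*(θ₁-θ₀)*(2-3*a₁)*((1-a₁)*c₂+h₂))
      = ((1-a₁)^2*(c₂+h₂) / ((2-3*a₁)*((1-a₁)*c₂+h₂)))
          * ((θ₁+h₁-c₁)^3 / (6*(θ₁-θ₀)*(c₂+h₂))) := by
  have h1 : (0:ℝ) < 1 - a₁ := by linarith
  have h2 : (0:ℝ) < 2 - 3*a₁ := by linarith
  have h3 : (0:ℝ) < (1-a₁)*c₂ + h₂ := by nlinarith
  have h4 : (0:ℝ) < θ₁ - θ₀ := by linarith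
  field_simp
end

section
/- Define π*(a₁) = (1-a₁)²K / ((2-3a₁)[(1-a₁)c₂ + h₂]) for a constant K > 0, c₂, h₂ ≥ 0 with c₂+h₂>0, and a₁ ∈ [0, 2/3). Then dπ*/da₁ > 0 if and only if c₂(1-a₁) + h₂(3a₁-1) > 0. In particular: (i) if c₂ ≥ h₂ then π* is strictly increasing on [0,2/3) except possibly at a single point; (ii) if h₂ > c₂ then π* is strictly decreasing for a₁ < (h₂-c₂)/(3h₂-c₂) and strictly increasing for (h₂-c₂)/(3h₂-c₂) < a₁ < 2/3. -/
/-- Sign of the derivative of the monopolist's maximal profit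
`π*(a₁) = (1-a₁)²K/((2-3a₁)[(1-a₁)c₂+h₂])` with respect to the bias `a₁`. -/
theorem stmt_7 (K c₂ h₂ : ℝ) (hK : 0 < K) (hc₂ : 0 ≤ c₂) (hh₂ : 0 ≤ h₂)
    (hsum : 0 < c₂ + h₂) :
    let πs : ℝ → ℝ := fun a => (1-a)^2 * K / ((2-3*a) * ((1-a)*c₂ + h₂))
    (∀ a₁ ∈ Set.Ico (0:ℝ) (2/3),
        (0 < deriv πs a₁ ↔ 0 < c₂*(1-a₁) + h₂*(3*a₁-1))) ∧
    (h₂ ≤ c₂ → ∃ x : ℝ, ∀ a₁ ∈ Set.Ico (0:ℝ) (2/3), a₁ ≠ x → 0 < deriv πs a₁) ∧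
    (c₂ < h₂ →
      (∀ a₁ ∈ Set.Ico (0:ℝ) (2/3), a₁ < (h₂-c₂)/(3*h₂-c₂) → deriv πs a₁ < 0) ∧
      (∀ a₁ ∈ Set.Ico (0:ℝ) (2/3), (h₂-c₂)/(3*h₂-c₂) < a₁ → 0 < deriv πs a₁)) := by
  intro πs
  -- key derivative formula on the interval
  have key : ∀ a ∈ Set.Ico (0:ℝ) (2/3),
      deriv πs a = (K*(1-a)/((2-3*a)*((1-a)*c₂+h₂))^2) * (c₂*(1-a)+h₂*(3*a-1)) := by
    intro a ha
    obtain ⟨ha0, ha2⟩ := ha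
    have hv0 : (0:ℝ) < (1-a)*c₂+h₂ := by nlinarith
    have h23 : (0:ℝ) < 2-3*a := by linarith
    have hg : (2-3*a)*((1-a)*c₂+h₂) ≠ 0 := by positivity
    have hu : HasDerivAt (fun x : ℝ => (1-x)^2*K) (2*(1-a)^1*(-1)*K) a := by
      exact (((hasDerivAt_id a).const_sub 1).pow 2).mul_const K
    have hv : HasDerivAt (fun x : ℝ => (2-3*x)*((1-x)*c₂+h₂))
        ((-(3*1))*((1-a)*c₂+h₂) + (2-3*a)*(-1*c₂)) a := by
      exact (((hasDerivAt_id a).const_mul 3).const_sub 2).mul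
        ((((hasDerivAt_id a).const_sub 1).mul_const c₂).add_const h₂)
    have hd := (hu.div hv hg).deriv
    have hπ : πs = fun x : ℝ => (1-x)^2*K / ((2-3*x)*((1-x)*c₂+h₂)) := rfl
    rw [hπ, show (fun x : ℝ => (1-x)^2*K / ((2-3*x)*((1-x)*c₂+h₂))) = (fun x : ℝ => (1-x)^2*K) / (fun x : ℝ => (2-3*x)*((1-x)*c₂+h₂)) from rfl, hd]
    field_simp
    ring
  have hP : ∀ a ∈ Set.Ico (0:ℝ) (2/3),
      0 < K*(1-a)/((2-3*a)*((1-a)*c₂+h₂))^2 := by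
    intro a ha
    obtain ⟨ha0, ha2⟩ := ha
    have hv0 : (0:ℝ) < (1-a)*c₂+h₂ := by nlinarith
    have h23 : (0:ℝ) < 2-3*a := by linarith
    have h1a : (0:ℝ) < 1-a := by linarith
    positivity
  refine ⟨?_, ?_, ?_⟩
  · intro a ha
    rw [key a ha]
    exact mul_pos_iff_of_pos_left (hP a ha)
  · intro hhc
    refine ⟨0, fun a ha hne => ?_⟩
    rw [key a ha]
    have ha0 := ha.1
    have ha2 := ha.2
    have ha0' : 0 < a := lt_of_le_of_ne ha0 (Ne.symm hne)
    have hE : 0 < c₂*(1-a)+h₂*(3*a-1) := by nlinarith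
    exact mul_pos (hP a ha) hE
  · intro hch
    have h3 : (0:ℝ) < 3*h₂-c₂ := by linarith
    constructor
    · intro a ha hlt
      rw [key a ha]
      have hE : c₂*(1-a)+h₂*(3*a-1) < 0 := by
        have h := (lt_div_iff₀ h3).mp hlt
        nlinarith
      exact mul_neg_of_pos_of_neg (hP a ha) hE
    · intro a ha hgt
      rw [key a ha]
      have hE : 0 < c₂*(1-a)+h₂*(3*a-1) := by
        have h := (div_lt_iff₀ h3).mp hgt
        nlinarith
      exact mul_pos (hP a ha) hE
end

section
/- For 1/3 < a₁ < 1/2 and all p ≥ 0, the function F(a₁,p) = (1-a₁)²[3(1-2a₁)((1-a₁)p + 1) + (1-a₁)a₁(p+3)] / ((2-3a₁)²((1-a₁)p+1)²) satisfies ∂F/∂a₁ > 0; and for (1+√73)/18 < a₁ < 2/3 and all p ≥ 0, ∂F/∂a₁ < 0. -/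
private lemma hasDerivAt_F (p a : ℝ) (h1 : (2-3*a) ≠ 0) (h2 : ((1-a)*p+1) ≠ 0) :
    HasDerivAt (fun a : ℝ => (1-a)^2 * (3*(1-2*a)*((1-a)*p+1) + (1-a)*a*(p+3)) /
        ((2-3*a)^2 * ((1-a)*p+1)^2))
      ((a-1) * ((4*a^3-10*a^2+8*a-2)*p^2 + (-9*a^3+10*a^2+a-2)*p + 18*a^3-15*a^2+3*a)
        / ((2-3*a)^3 * ((1-a)*p+1)^3)) a := by
  have hone : HasDerivAt (fun a : ℝ => 1 - a) (-1) a := by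
    simpa using (hasDerivAt_id a).const_sub 1
  have hlin : HasDerivAt (fun a : ℝ => (1-a)*p+1) (-p) a := by
    simpa using (hone.mul_const p).add_const 1
  have hN : HasDerivAt (fun a : ℝ => (1-a)^2 * (3*(1-2*a)*((1-a)*p+1) + (1-a)*a*(p+3)))
      ((2*(1-a)*(-1)) * (3*(1-2*a)*((1-a)*p+1) + (1-a)*a*(p+3))
       + (1-a)^2 * ((3*(-2)*((1-a)*p+1) + 3*(1-2*a)*(-p))
          + ((-1*a + (1-a)*1)*(p+3)))) a := by
    have h2a : HasDerivAt (fun a : ℝ => 3*(1-2*a)) (3*(-2)) a := by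
      have : HasDerivAt (fun a : ℝ => 1-2*a) (-2) a := by
        simpa using ((hasDerivAt_id a).const_mul 2).const_sub 1
      simpa using this.const_mul 3
    have hia : HasDerivAt (fun a : ℝ => (1-a)*a) (-1*a + (1-a)*1) a :=
      hone.mul (hasDerivAt_id a)
    have := ((h2a.mul hlin).add (hia.mul_const (p+3)))
    have hsq : HasDerivAt (fun a : ℝ => (1-a)^2) (2*(1-a)*(-1)) a := by
      simpa using hone.fun_pow 2
    simpa using hsq.fun_mul this
  have hD : HasDerivAt (fun a : ℝ => (2-3*a)^2 * ((1-a)*p+1)^2)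
      ((2*(2-3*a)*(-3)) * ((1-a)*p+1)^2 + (2-3*a)^2 * (2*((1-a)*p+1)*(-p))) a := by
    have h3 : HasDerivAt (fun a : ℝ => (2-3*a)^2) (2*(2-3*a)*(-3)) a := by
      have : HasDerivAt (fun a : ℝ => 2-3*a) (-3) a := by
        simpa using ((hasDerivAt_id a).const_mul 3).const_sub 2
      simpa using this.fun_pow 2
    have h4 : HasDerivAt (fun a : ℝ => ((1-a)*p+1)^2) (2*((1-a)*p+1)*(-p)) a := by
      simpa using hlin.fun_pow 2
    simpa using h3.fun_mul h4
  have hDne : (2-3*a)^2 * ((1-a)*p+1)^2 ≠ 0 := by positivity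
  have := hN.fun_div hD hDne
  refine this.congr_deriv ?_
  rw [div_eq_div_iff (by positivity) (by positivity)]
  ring

/-- Sign of the derivative of the welfare function `F(a₁,p)` under the optimal
quadratic price scheme with respect to the bias parameter `a₁`. -/
theorem stmt_8 :
    let F : ℝ → ℝ → ℝ := fun a p =>
      (1-a)^2 * (3*(1-2*a)*((1-a)*p+1) + (1-a)*a*(p+3)) /
        ((2-3*a)^2 * ((1-a)*p+1)^2)
    (∀ p : ℝ, 0 ≤ p → ∀ a ∈ Set.Ioo (1/3 : ℝ) (1/2 : ℝ),
        0 < deriv (fun a => F a p) a) ∧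
    (∀ p : ℝ, 0 ≤ p → ∀ a ∈ Set.Ioo ((1 + Real.sqrt 73)/18) (2/3 : ℝ),
        deriv (fun a => F a p) a < 0) := by
  intro F
  constructor
  · intro p hp a ha
    obtain ⟨ha1, ha2⟩ := ha
    have hc : (0:ℝ) < 2 - 3*a := by linarith
    have hl : (0:ℝ) < (1-a)*p + 1 := by nlinarith
    have hd := (hasDerivAt_F p a (ne_of_gt hc) (ne_of_gt hl)).deriv
    show 0 < deriv (fun a => F a p) a
    rw [show (fun a => F a p) = (fun a : ℝ => (1-a)^2 * (3*(1-2*a)*((1-a)*p+1) + (1-a)*a*(p+3)) /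
        ((2-3*a)^2 * ((1-a)*p+1)^2)) from rfl, hd]
    have hG : (4*a^3-10*a^2+8*a-2)*p^2 + (-9*a^3+10*a^2+a-2)*p + 18*a^3-15*a^2+3*a < 0 := by
      have t1 : (4*a^3-10*a^2+8*a-2)*p^2 ≤ 0 := by
        have : (4*a^3-10*a^2+8*a-2) ≤ 0 := by nlinarith [sq_nonneg (a-1)]
        nlinarith [sq_nonneg p]
      have t2 : (-9*a^3+10*a^2+a-2)*p ≤ 0 := by
        have hA : (0:ℝ) < 1 - a := by linarith
        have : (-9*a^3+10*a^2+a-2) ≤ 0 := by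
          nlinarith [mul_pos hA (show (0:ℝ) < 2 + a - 9*a^2 by nlinarith)]
        nlinarith
      have t3 : 18*a^3-15*a^2+3*a < 0 := by
        nlinarith [mul_pos (mul_pos (show (0:ℝ) < a by linarith)
          (show (0:ℝ) < 3*a-1 by linarith)) (show (0:ℝ) < 1-2*a by linarith)]
      linarith
    have hden : 0 < (2-3*a)^3 * ((1-a)*p+1)^3 := by positivity
    apply div_pos _ hden
    nlinarith
  · intro p hp a ha
    obtain ⟨ha1, ha2⟩ := ha
    have hs8 : (8:ℝ) < Real.sqrt 73 := by
      have : (8:ℝ) = Real.sqrt 64 := by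
        rw [show (64:ℝ) = 8^2 by norm_num, Real.sqrt_sq (by norm_num)]
      rw [this]
      exact Real.sqrt_lt_sqrt (by norm_num) (by norm_num)
    have hssq : Real.sqrt 73 ^ 2 = 73 := Real.sq_sqrt (by norm_num)
    have ha12 : (1/2 : ℝ) < a := by
      have : (1 + Real.sqrt 73)/18 > 1/2 := by nlinarith
      linarith
    have hq : 0 < 9*a^2 - a - 2 := by
      have h18 : 1 + Real.sqrt 73 < 18*a := by linarith
      nlinarith [Real.sqrt_nonneg 73]
    have hc : (0:ℝ) < 2 - 3*a := by linarith
    have hl : (0:ℝ) < (1-a)*p + 1 := by nlinarith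
    have hd := (hasDerivAt_F p a (ne_of_gt hc) (ne_of_gt hl)).deriv
    show deriv (fun a => F a p) a < 0
    rw [show (fun a => F a p) = (fun a : ℝ => (1-a)^2 * (3*(1-2*a)*((1-a)*p+1) + (1-a)*a*(p+3)) /
        ((2-3*a)^2 * ((1-a)*p+1)^2)) from rfl, hd]
    have hG : 0 < (4*a^3-10*a^2+8*a-2)*p^2 + (-9*a^3+10*a^2+a-2)*p + 18*a^3-15*a^2+3*a := by
      have t1 : 0 ≤ (4*a^3-10*a^2+8*a-2)*p^2 := by
        have : 0 ≤ (4*a^3-10*a^2+8*a-2) := by nlinarith [sq_nonneg (a-1)]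
        positivity
      have t2 : 0 ≤ (-9*a^3+10*a^2+a-2)*p := by
        have : 0 ≤ (-9*a^3+10*a^2+a-2) := by nlinarith
        positivity
      have t3 : 0 < 18*a^3-15*a^2+3*a := by nlinarith
      linarith
    have hden : 0 < (2-3*a)^3 * ((1-a)*p+1)^3 := by positivity
    apply div_neg_of_neg_of_pos _ hden
    nlinarith
end

section
/- Define G(a₁,p) = 1/(p+1) - F(a₁,p) with F(a₁,p) = (1-a₁)²[3(1-2a₁)((1-a₁)p+1) + (1-a₁)a₁(p+3)] / ((2-3a₁)²((1-a₁)p+1)²). Then for all 0 ≤ a₁ ≤ 1/2 and p ≥ 0, ∂G/∂p < 0. -/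
/-- Positivity of the key cubic `P₂(a,t)` appearing in the derivative computation. -/
lemma stmt_11_P2 (a t : ℝ) (ha : 0 ≤ a) (ha2 : a ≤ 1/2) (ht : 0 ≤ t) :
    0 < (2-3*a)^2*(1+t)^3
      - (1-a)*((1+t)-a)^2*((3-5*a)*(1+t) + 2*a*(2-3*a)) := by
  have c0 : 0 < 1-2*a+3*a^2-12*a^3+17*a^4-6*a^5 := by
    nlinarith [sq_nonneg a, sq_nonneg (1-2*a), mul_nonneg ha ha,
      mul_nonneg (mul_nonneg ha ha) ha, sq_nonneg (a*(1-2*a)),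
      mul_nonneg (mul_nonneg (mul_nonneg ha ha) ha) ha,
      mul_nonneg (mul_nonneg (mul_nonneg ha ha) ha) (sub_nonneg.2 ha2),
      mul_nonneg (mul_nonneg (mul_nonneg (mul_nonneg ha ha) ha) ha) (sub_nonneg.2 ha2)]
  have c1 : (0:ℝ) ≤ 3-8*a+5*a^2-4*a^3+7*a^4 := by
    nlinarith [sq_nonneg a, sq_nonneg (1-2*a), mul_nonneg (mul_nonneg ha ha) ha,
      sq_nonneg (a*(1-2*a)), mul_nonneg (mul_nonneg ha ha) (sub_nonneg.2 ha2),
      mul_nonneg (mul_nonneg (mul_nonneg ha ha) ha) (sub_nonneg.2 ha2)]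
  have c2 : (0:ℝ) ≤ 3-10*a+6*a^2+4*a^3 := by
    nlinarith [mul_nonneg (mul_nonneg ha ha) (sub_nonneg.2 ha2), sq_nonneg (1-2*a),
      mul_nonneg ha (sub_nonneg.2 ha2)]
  have c3 : (0:ℝ) ≤ (1-2*a)^2 := sq_nonneg _
  nlinarith [mul_nonneg c1 ht, mul_nonneg c2 (mul_nonneg ht ht),
    mul_nonneg c3 (mul_nonneg (mul_nonneg ht ht) ht)]

/-- The efficiency cost `G(a₁,p) = 1/(p+1) - F(a₁,p)` is strictly decreasing
in `p` for all `a₁ ∈ [0,1/2]` and `p ≥ 0`. -/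
theorem stmt_11 :
    let F : ℝ → ℝ → ℝ := fun a p =>
      (1-a)^2 * (3*(1-2*a)*((1-a)*p+1) + (1-a)*a*(p+3)) /
        ((2-3*a)^2 * ((1-a)*p+1)^2)
    let G : ℝ → ℝ → ℝ := fun a p => 1/(p+1) - F a p
    ∀ a₁ : ℝ, 0 ≤ a₁ → a₁ ≤ 1/2 → ∀ p : ℝ, 0 ≤ p →
      deriv (fun p => G a₁ p) p < 0 := by
  intro F G a ha ha2 p hp
  have hq0 : (0:ℝ) < (1-a)*p+1 := by nlinarith
  have hc : (0:ℝ) < 2-3*a := by linarith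
  have hp1 : (0:ℝ) < p+1 := by linarith
  have hd0 : (2-3*a)^2 * ((1-a)*p+1)^2 ≠ 0 := by positivity
  have h1 : HasDerivAt (fun p : ℝ => (1-a)*p+1) (1-a) p := by
    simpa using ((hasDerivAt_id p).const_mul (1-a)).add_const 1
  -- derivative of numerator
  have hn : HasDerivAt (fun p : ℝ => (1-a)^2 * (3*(1-2*a)*((1-a)*p+1) + (1-a)*a*(p+3)))
      ((1-a)^2*(3*(1-2*a)*(1-a) + (1-a)*a)) p := by
    have h2 : HasDerivAt (fun p : ℝ => p+3) 1 p := by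
      simpa using (hasDerivAt_id p).add_const 3
    have h3 := ((h1.const_mul (3*(1-2*a))).fun_add (h2.const_mul ((1-a)*a))).const_mul ((1-a)^2)
    refine h3.congr_deriv ?_
    ring
  -- derivative of denominator
  have hd : HasDerivAt (fun p : ℝ => (2-3*a)^2 * ((1-a)*p+1)^2)
      ((2-3*a)^2 * (2*((1-a)*p+1)*(1-a))) p := by
    have h3 := (h1.fun_pow 2).const_mul ((2-3*a)^2)
    refine h3.congr_deriv ?_
    ring
  have hF : HasDerivAt (fun p => F a p)
      ((((1-a)^2*(3*(1-2*a)*(1-a) + (1-a)*a)) * ((2-3*a)^2 * ((1-a)*p+1)^2)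
        - ((1-a)^2 * (3*(1-2*a)*((1-a)*p+1) + (1-a)*a*(p+3)))
          * ((2-3*a)^2 * (2*((1-a)*p+1)*(1-a)))) / ((2-3*a)^2 * ((1-a)*p+1)^2)^2) p :=
    hn.div hd hd0
  have hinv : HasDerivAt (fun p : ℝ => 1/(p+1)) (-(1/(p+1)^2)) p := by
    have h2 : HasDerivAt (fun p : ℝ => p+1) 1 p := by
      simpa using (hasDerivAt_id p).add_const 1
    have h3 := h2.fun_inv (by linarith : p+1 ≠ 0)
    have : -1/(p+1)^2 = -(1/(p+1)^2) := by ring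
    simpa [one_div, this] using h3
  have hG : HasDerivAt (fun p => G a p)
      (-(1/(p+1)^2) - (((1-a)^2*(3*(1-2*a)*(1-a) + (1-a)*a)) * ((2-3*a)^2 * ((1-a)*p+1)^2)
        - ((1-a)^2 * (3*(1-2*a)*((1-a)*p+1) + (1-a)*a*(p+3)))
          * ((2-3*a)^2 * (2*((1-a)*p+1)*(1-a)))) / ((2-3*a)^2 * ((1-a)*p+1)^2)^2) p :=
    hinv.sub hF
  rw [hG.deriv, sub_neg]
  -- key positivity
  have hP2 := stmt_11_P2 a ((1-a)*p) ha ha2 (by nlinarith)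
  have hsum : (((1-a)^2*(3*(1-2*a)*(1-a) + (1-a)*a)) * ((2-3*a)^2 * ((1-a)*p+1)^2)
        - ((1-a)^2 * (3*(1-2*a)*((1-a)*p+1) + (1-a)*a*(p+3)))
          * ((2-3*a)^2 * (2*((1-a)*p+1)*(1-a)))) / ((2-3*a)^2 * ((1-a)*p+1)^2)^2
      + 1/(p+1)^2
      = ((2-3*a)^2 * ((1-a)*p+1) *
          ((2-3*a)^2*(1+(1-a)*p)^3
            - (1-a)*((1+(1-a)*p)-a)^2*((3-5*a)*(1+(1-a)*p) + 2*a*(2-3*a))))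
        / (((2-3*a)^2 * ((1-a)*p+1)^2)^2 * (p+1)^2) := by
    rw [div_add_div _ _ (by positivity) (by positivity), div_eq_div_iff (by positivity) (by positivity)]
    ring
  have hpos : (0:ℝ) < ((2-3*a)^2 * ((1-a)*p+1) *
          ((2-3*a)^2*(1+(1-a)*p)^3
            - (1-a)*((1+(1-a)*p)-a)^2*((3-5*a)*(1+(1-a)*p) + 2*a*(2-3*a))))
        / (((2-3*a)^2 * ((1-a)*p+1)^2)^2 * (p+1)^2) := by
    apply div_pos
    · exact mul_pos (mul_pos (by positivity) hq0) hP2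
    · positivity
  linarith [hsum ▸ hpos]
end

section
/- Define H(a₁,p) = (1-a₁)²[(1-3a₁)((1-a₁)p + 1) + a₁(1-a₁)(p+3)] / ((2-3a₁)²((1-a₁)p+1)²) for a₁ ∈ [0,2/3), p ≥ 0. If 0 ≤ p ≤ 1.94 and 0 ≤ a₁ < max{(1-p)/(3-p), (p-1)/(p+1)}, then ∂H/∂a₁ > 0; and if 0.4 < a₁ < 2/3 then ∂H/∂a₁ < 0. -/
private lemma quartic_deriv (c0 c1 c2 c3 c4 x : ℝ) :
    HasDerivAt (fun a : ℝ => c0 + c1*a + c2*a^2 + c3*a^3 + c4*a^4)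
      (c1 + 2*c2*x + 3*c3*x^2 + 4*c4*x^3) x := by
  have h : HasDerivAt (fun a : ℝ => c0 + c1*a + c2*a^2 + c3*a^3 + c4*a^4)
      (0 + c1*1 + c2*(2*x^1) + c3*(3*x^2) + c4*(4*x^3)) x :=
    ((((hasDerivAt_const x c0).add ((hasDerivAt_id x).const_mul c1)).add
      ((hasDerivAt_pow 2 x).const_mul c2)).add
      ((hasDerivAt_pow 3 x).const_mul c3)).add
      ((hasDerivAt_pow 4 x).const_mul c4)
  convert h using 1
  ring

private lemma deriv_H (p x : ℝ) (h2 : (2:ℝ) - 3*x ≠ 0) (h3 : (1-x)*p+1 ≠ 0) :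
    deriv (fun a : ℝ => (1-a)^2 * ((1-3*a)*((1-a)*p+1) + a*(1-a)*(p+3)) /
        ((2-3*a)^2 * ((1-a)*p+1)^2)) x
    = ((x-1) * (x*(x-1)^2*p^2 - (5*x-2)*(x-1)*p + 2*(3*x-1)*(3*x^2-3*x+1))
        * (2-3*x) * ((1-x)*p+1)) /
      ((2-3*x)^2 * ((1-x)*p+1)^2)^2 := by
  have hN := quartic_deriv (1+p) (-2-5*p) (-2+9*p) (6-7*p) (-3+2*p) x
  have hD := quartic_deriv (4+8*p+4*p^2) (-12-32*p-20*p^2) (9+42*p+37*p^2)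
      (-18*p-30*p^2) (9*p^2) x
  have hDval : (4+8*p+4*p^2) + (-12-32*p-20*p^2)*x + (9+42*p+37*p^2)*x^2
      + (-18*p-30*p^2)*x^3 + (9*p^2)*x^4 = (2-3*x)^2 * ((1-x)*p+1)^2 := by ring
  have hDne : (4+8*p+4*p^2) + (-12-32*p-20*p^2)*x + (9+42*p+37*p^2)*x^2
      + (-18*p-30*p^2)*x^3 + (9*p^2)*x^4 ≠ 0 := by
    rw [hDval]
    exact mul_ne_zero (pow_ne_zero _ h2) (pow_ne_zero _ h3)
  have hdiv := hN.div hD hDne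
  have hfun : (fun a : ℝ => (1-a)^2 * ((1-3*a)*((1-a)*p+1) + a*(1-a)*(p+3)) /
        ((2-3*a)^2 * ((1-a)*p+1)^2))
      = (fun a : ℝ => ((1+p) + (-2-5*p)*a + (-2+9*p)*a^2 + (6-7*p)*a^3 + (-3+2*p)*a^4) /
        ((4+8*p+4*p^2) + (-12-32*p-20*p^2)*a + (9+42*p+37*p^2)*a^2
          + (-18*p-30*p^2)*a^3 + (9*p^2)*a^4)) := by
    funext a; ring
  rw [hfun]
  erw [hdiv.deriv]
  rw [div_eq_div_iff (pow_ne_zero _ hDne)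
    (pow_ne_zero _ (mul_ne_zero (pow_ne_zero _ h2) (pow_ne_zero _ h3)))]
  ring

/-- Q < 0 in case A : `a*(3-p) < 1-p`. -/
private lemma QA (a p : ℝ) (ha : 0 ≤ a) (hp : 0 ≤ p) (hp194 : p ≤ 1.94)
    (hA : a*(3-p) < 1-p) (ha13 : a < 1/3) :
    a*(a-1)^2*p^2 - (5*a-2)*(a-1)*p + 2*(3*a-1)*(3*a^2-3*a+1) < 0 := by
  have hu : 0 < 1 - p - a*(3-p) := by linarith
  have hS : (0:ℝ) < 3*a^2 - 3*a + 1 := by nlinarith [sq_nonneg (2*a-1)]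
  have hG : 6*a^3 - 17*a^2 + 15*a - 4 + p*(a*(a-1)^2) < 0 := by
    nlinarith [mul_nonneg (mul_nonneg ha (sub_nonneg.mpr hp194)) (sq_nonneg (a-1)),
      mul_nonneg ha (sq_nonneg (3*a-1)), sq_nonneg (3*a-1),
      mul_nonneg (le_of_lt (by linarith : (0:ℝ) < 1/3 - a)) (sq_nonneg (3*a-1))]
  nlinarith [mul_pos hu hS, mul_nonneg hp (le_of_lt (neg_pos.mpr hG))]

/-- Q < 0 in case B : `a*(p+1) < p-1`. -/
private lemma QB (a p : ℝ) (ha : 0 ≤ a) (hp : 0 ≤ p) (hp194 : p ≤ 1.94)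
    (hB : a*(p+1) < p-1) (ha13 : a < 1/3) :
    a*(a-1)^2*p^2 - (5*a-2)*(a-1)*p + 2*(3*a-1)*(3*a^2-3*a+1) < 0 := by
  have hu : 0 < p - 1 - a*(p+1) := by linarith
  have hq : (0:ℝ) ≤ 1.94 - p := by linarith
  nlinarith [mul_pos hu hu, mul_nonneg hu.le hp, mul_nonneg hu.le ha,
    mul_nonneg (mul_nonneg hu.le ha) ha, mul_nonneg hu.le hq,
    mul_nonneg hq ha, mul_nonneg hq (sq_nonneg (3*a-1)),
    mul_nonneg hu.le (sq_nonneg (3*a-1)),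
    mul_nonneg (mul_nonneg hu.le hp) hp, mul_nonneg (mul_nonneg hu.le hp) ha,
    mul_nonneg (mul_nonneg hq ha) ha, mul_nonneg (mul_nonneg hq hq) ha,
    sq_nonneg (3*a-1), mul_nonneg ha (sq_nonneg (3*a-1))]

/-- Sign of the derivative of the consumer-surplus function `H(a₁,p)` with
respect to the bias `a₁`. -/
theorem stmt_12 :
    let H : ℝ → ℝ → ℝ := fun a p =>
      (1-a)^2 * ((1-3*a)*((1-a)*p+1) + a*(1-a)*(p+3)) /
        ((2-3*a)^2 * ((1-a)*p+1)^2)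
    (∀ p : ℝ, 0 ≤ p → p ≤ 1.94 → ∀ a₁ : ℝ, 0 ≤ a₁ →
        a₁ < max ((1-p)/(3-p)) ((p-1)/(p+1)) →
        0 < deriv (fun a => H a p) a₁) ∧
    (∀ p : ℝ, 0 ≤ p → ∀ a₁ : ℝ, 0.4 < a₁ → a₁ < 2/3 →
        deriv (fun a => H a p) a₁ < 0) := by
  intro H
  constructor
  · intro p hp hp194 a ha hmax
    have hp194' : p ≤ 1.94 := hp194
    have hQ : a*(a-1)^2*p^2 - (5*a-2)*(a-1)*p + 2*(3*a-1)*(3*a^2-3*a+1) < 0 ∧ a < 1/3 := by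
      rcases lt_max_iff.mp hmax with h | h
      · have h3p : (0:ℝ) < 3 - p := by nlinarith
        have hA : a * (3-p) < 1 - p := (lt_div_iff₀ h3p).mp h
        have ha13 : a < 1/3 := by nlinarith
        exact ⟨QA a p ha hp hp194' hA ha13, ha13⟩
      · have hp1 : (0:ℝ) < p + 1 := by linarith
        have hB : a * (p+1) < p - 1 := (lt_div_iff₀ hp1).mp h
        have ha13 : a < 1/3 := by nlinarith
        exact ⟨QB a p ha hp hp194' hB ha13, ha13⟩
    obtain ⟨hQneg, ha13⟩ := hQ
    have h2 : (0:ℝ) < 2 - 3*a := by linarith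
    have h3 : (0:ℝ) < (1-a)*p + 1 := by nlinarith
    show 0 < deriv (fun a => H a p) a
    simp only [H]
    rw [deriv_H p a h2.ne' h3.ne']
    apply div_pos
    · have h1 : a - 1 < 0 := by linarith
      exact mul_pos (mul_pos (mul_pos_of_neg_of_neg h1 hQneg) h2) h3
    · positivity
  · intro p hp a ha4 ha23
    have ha4' : (0.4:ℝ) < a := ha4
    have h2 : (0:ℝ) < 2 - 3*a := by linarith
    have h1a : (0:ℝ) < 1 - a := by linarith
    have h3 : (0:ℝ) < (1-a)*p + 1 := by nlinarith
    show deriv (fun a => H a p) a < 0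
    simp only [H]
    rw [deriv_H p a h2.ne' h3.ne']
    apply div_neg_of_neg_of_pos
    · have hQpos : 0 < a*(a-1)^2*p^2 - (5*a-2)*(a-1)*p + 2*(3*a-1)*(3*a^2-3*a+1) := by
        have hS : (0:ℝ) < 3*a^2 - 3*a + 1 := by nlinarith [sq_nonneg (2*a-1)]
        nlinarith [mul_nonneg (mul_nonneg (by linarith : (0:ℝ) ≤ a) (sq_nonneg (a-1))) (sq_nonneg p),
          mul_nonneg (mul_nonneg (by linarith : (0:ℝ) ≤ 5*a-2) h1a.le) hp,
          mul_pos (by linarith : (0:ℝ) < 3*a-1) hS]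
      have h1 : a - 1 < 0 := by linarith
      exact mul_neg_of_neg_of_pos
        (mul_neg_of_neg_of_pos (mul_neg_of_neg_of_pos h1 hQpos) h2) h3
    · positivity
end

section
/- In the two-tariff setting with p₁ = p₂ (equal lower marginal prices), the aggregate consumptions satisfy Q(P₁) ≥ Q(P₂); moreover ∂Q(P₁)/∂λ = 0 and ∂Q(P₂)/∂λ ≥ 0, so the reduction Q(P₁) - Q(P₂) is nonincreasing in the fraction λ of average-price-biased consumers. -/
open MeasureTheory Filter

lemma stmt17_F01 {θ₀ θ₁ : ℝ} {F : ℝ → ℝ} (hFmono : Monotone F)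
    (hF0 : ∀ θ < θ₀, F θ = 0) (hF1 : ∀ θ ≥ θ₁, F θ = 1) (x : ℝ) :
    0 ≤ F x ∧ F x ≤ 1 := by
  constructor
  · rcases lt_or_ge x θ₀ with hx | hx
    · rw [hF0 x hx]
    · have : F (θ₀ - 1) = 0 := hF0 _ (by linarith)
      have := hFmono (show θ₀ - 1 ≤ x by linarith)
      linarith
  · rcases le_or_gt θ₁ x with hx | hx
    · rw [hF1 x hx]
    · have h1 : F θ₁ = 1 := hF1 θ₁ le_rfl
      have := hFmono hx.le
      linarith

lemma stmt17_integrable {θ₀ θ₁ p₁ M : ℝ} {F D g : ℝ → ℝ}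
    (hFmono : Monotone F) (hFcont : Continuous F)
    (hF0 : ∀ θ < θ₀, F θ = 0) (hF1 : ∀ θ ≥ θ₁, F θ = 1)
    (hD : Measurable D) (hM : ∀ q ≥ M, D q ≤ p₁ - θ₁)
    (hg : Measurable g) (hgp : ∀ q ∈ Set.Ioi (0:ℝ), p₁ ≤ g q) :
    IntegrableOn (fun q => 1 - F (g q - D q)) (Set.Ioi (0:ℝ)) := by
  have hmeas : Measurable (fun q => 1 - F (g q - D q)) :=
    (measurable_const.sub (hFcont.measurable.comp (hg.sub hD)))
  have hbd : Integrable ((Set.Ioc (0:ℝ) M).indicator (fun _ => (1:ℝ))) :=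
    (integrable_indicator_iff measurableSet_Ioc).2
      (integrableOn_const measure_Ioc_lt_top.ne)
  refine Integrable.mono' hbd.integrableOn hmeas.aestronglyMeasurable.restrict ?_
  refine (ae_restrict_iff' measurableSet_Ioi).2 (Filter.Eventually.of_forall ?_)
  intro q hq
  rcases le_or_gt q M with hqM | hqM
  · have h01 := stmt17_F01 hFmono hF0 hF1 (g q - D q)
    have hmem : q ∈ Set.Ioc (0:ℝ) M := Set.mem_Ioc.mpr ⟨hq, hqM⟩
    have : (Set.Ioc (0:ℝ) M).indicator (fun _ => (1:ℝ)) q = 1 :=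
      Set.indicator_of_mem hmem _
    rw [this, Real.norm_eq_abs, abs_le]
    constructor <;> linarith [h01.1, h01.2]
  · have harg : θ₁ ≤ g q - D q := by
      have := hM q hqM.le
      have := hgp q hq
      linarith
    have hF : F (g q - D q) = 1 := hF1 _ harg
    rw [hF]
    simp only [sub_self, norm_zero, Set.indicator_apply]
    split <;> norm_num

/-- With equal lower marginal prices (`p₁ = p₂`), the flat tariff yields at
least as much aggregate consumption as the two-tier tariff; `Q(P₁)` does not
depend on `λ`, `Q(P₂)` is nondecreasing in `λ`, and the reduction
`Q(P₁) - Q(P₂)` is nonincreasing in the fraction `λ` of biased consumers. -/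
theorem stmt_17 (θ₀ θ₁ p₁ p₃ qb : ℝ) (h F : ℝ → ℝ)
    (hθ : θ₀ < θ₁) (hp' : p₁ < p₃) (hqb : 0 < qb)
    (hh : Differentiable ℝ h) (hh0 : h 0 = 0)
    (hconc : StrictAnti (deriv h))
    (hlim : Tendsto (deriv h) atTop atBot)
    (hFmono : Monotone F) (hFcont : Continuous F)
    (hF0 : ∀ θ < θ₀, F θ = 0) (hF1 : ∀ θ ≥ θ₁, F θ = 1) :
    let I1 : ℝ := ∫ q in Set.Ioi (0:ℝ), (1 - F (p₁ - deriv h q))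
    let I2hat : ℝ := ∫ q in Set.Ioi (0:ℝ),
        (1 - F ((if q ≤ qb then p₁ else p₃) - deriv h q))
    let I2til : ℝ := ∫ q in Set.Ioi (0:ℝ),
        (1 - F ((if q ≤ qb then p₁*q else p₁*qb + p₃*(q - qb)) / q - deriv h q))
    let Q1 : ℝ → ℝ := fun l => (1 - l) * I1 + l * I1
    let Q2 : ℝ → ℝ := fun l => (1 - l) * I2hat + l * I2til
    (∀ l ∈ Set.Icc (0:ℝ) 1, Q2 l ≤ Q1 l) ∧
    (∀ l : ℝ, deriv Q1 l = 0) ∧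
    (∀ l : ℝ, 0 ≤ deriv Q2 l) ∧
    AntitoneOn (fun l => Q1 l - Q2 l) (Set.Icc (0:ℝ) 1) := by
  intro I1 I2hat I2til Q1 Q2
  set D := deriv h with hD
  have hDmeas : Measurable D := measurable_deriv h
  obtain ⟨M, hM⟩ : ∃ M, ∀ q ≥ M, D q ≤ p₁ - θ₁ := by
    have := (tendsto_atBot.mp hlim (p₁ - θ₁))
    exact eventually_atTop.mp this
  -- the three price functions
  set g1 : ℝ → ℝ := fun _ => p₁ with hg1
  set g2 : ℝ → ℝ := fun q => if q ≤ qb then p₁ else p₃ with hg2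
  set g3 : ℝ → ℝ := fun q => (if q ≤ qb then p₁*q else p₁*qb + p₃*(q - qb)) / q with hg3
  have hg1m : Measurable g1 := measurable_const
  have hg2m : Measurable g2 := by
    apply Measurable.ite (measurableSet_le measurable_id measurable_const) <;>
      exact measurable_const
  have hg3m : Measurable g3 := by
    apply Measurable.div _ measurable_id
    apply Measurable.ite (measurableSet_le measurable_id measurable_const)
    · exact measurable_const.mul measurable_id
    · exact (measurable_const.mul measurable_const).add
        (measurable_const.mul (measurable_id.sub measurable_const))
  have hg1p : ∀ q ∈ Set.Ioi (0:ℝ), p₁ ≤ g1 q := fun q _ => le_rfl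
  have hg2p : ∀ q ∈ Set.Ioi (0:ℝ), p₁ ≤ g2 q := by
    intro q _; simp only [hg2]; split <;> linarith
  have hg3p : ∀ q ∈ Set.Ioi (0:ℝ), p₁ ≤ g3 q := by
    intro q hq
    simp only [hg3]
    rw [le_div_iff₀ hq]
    split_ifs with hcase
    · linarith
    · push_neg at hcase
      nlinarith [hp'.le]
  have hg32 : ∀ q ∈ Set.Ioi (0:ℝ), g3 q ≤ g2 q := by
    intro q hq
    simp only [hg2, hg3]
    rw [div_le_iff₀ hq]
    split_ifs with hcase
    · linarith
    · push_neg at hcase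
      nlinarith [hp'.le]
  have int1 := stmt17_integrable hFmono hFcont hF0 hF1 hDmeas hM hg1m hg1p
  have int2 := stmt17_integrable hFmono hFcont hF0 hF1 hDmeas hM hg2m hg2p
  have int3 := stmt17_integrable hFmono hFcont hF0 hF1 hDmeas hM hg3m hg3p
  -- integral comparisons
  have hI21 : I2hat ≤ I1 := by
    apply setIntegral_mono_on int2 int1 measurableSet_Ioi
    intro q hq
    have := hFmono (show g1 q - D q ≤ g2 q - D q by
      have := hg2p q hq; simp only [hg1]; linarith)
    linarith
  have hI31 : I2til ≤ I1 := by
    apply setIntegral_mono_on int3 int1 measurableSet_Ioi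
    intro q hq
    have := hFmono (show g1 q - D q ≤ g3 q - D q by
      have := hg3p q hq; simp only [hg1]; linarith)
    linarith
  have hI23 : I2hat ≤ I2til := by
    apply setIntegral_mono_on int2 int3 measurableSet_Ioi
    intro q hq
    have := hFmono (show g3 q - D q ≤ g2 q - D q by
      have := hg32 q hq; linarith)
    linarith
  refine ⟨?_, ?_, ?_, ?_⟩
  · intro l hl
    obtain ⟨hl0, hl1⟩ := hl
    simp only [Q1, Q2]
    nlinarith
  · intro l
    have hQ1 : Q1 = fun _ => I1 := by funext l; simp only [Q1]; ring
    rw [hQ1, deriv_const]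
  · intro l
    have hQ2 : Q2 = fun l => (I2til - I2hat) * l + I2hat := by
      funext l; simp only [Q2]; ring
    rw [hQ2]
    have : deriv (fun l => (I2til - I2hat) * l + I2hat) l = I2til - I2hat := by
      have := (((hasDerivAt_id l).const_mul (I2til - I2hat)).add_const I2hat).deriv
      simpa using this
    rw [this]
    linarith
  · intro a ha b hb hab
    simp only [Q1, Q2]
    nlinarith [hI23]
end

section
/- Suppose there exists β ∈ [0,1], β ≠ 1, such that the perceived marginal price is P̃'(q) = βP(q)/q + (1-β)P'(q). If P is a twice continuously differentiable maximizer of the monopolist's profit ∫₀^{q*} (P'(q)-C'(q))(1 - F(P̃'(q) - h'(q)))dq subject to P(0)=0 and the transversality conditions βP(q*)/q* + (1-β)P'(q*) - h'(q*) = θ₁ and ∂H/∂P'(q*, P(q*), P'(q*)) = 0 where H(q,y,z) = (z - C'(q))(1 - F(βy/q + (1-β)z - h'(q))), then P'(q*) = C'(q*): the marginal price equals marginal cost at the top consumption. -/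
/-- No distortion at the top: if the perceived marginal price is
`βP(q)/q + (1-β)P'(q)` with `β ≠ 1`, and `P` maximizes the monopolist's
profit subject to the two Euler–Lagrange endpoint (transversality)
conditions at the top consumption `q*`, then `P'(q*) = C'(q*)`. -/
theorem stmt_19 (β θ₀ θ₁ qs : ℝ) (P C h F f : ℝ → ℝ)
    (hβ : β ∈ Set.Icc (0:ℝ) 1) (hβ1 : β ≠ 1)
    (hθ : θ₀ < θ₁)
    (hP : ContDiff ℝ 2 P) (hP0 : P 0 = 0)
    (hC : ContDiff ℝ 2 C) (hC0 : C 0 = 0) (hCconv : ConvexOn ℝ (Set.Ici 0) C)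
    (hh : Differentiable ℝ h) (hconc : StrictAnti (deriv h))
    (hqs : 0 < qs)
    (hF : ∀ θ, HasDerivAt F (f θ) θ) (hF1 : F θ₁ = 1) (hf : 0 < f θ₁)
    (hmax : ∀ Q : ℝ → ℝ, ContDiff ℝ 2 Q → Q 0 = 0 →
      (∫ q in (0:ℝ)..qs, (deriv Q q - deriv C q) *
          (1 - F (β * Q q / q + (1-β) * deriv Q q - deriv h q)))
        ≤ ∫ q in (0:ℝ)..qs, (deriv P q - deriv C q) *
          (1 - F (β * P q / q + (1-β) * deriv P q - deriv h q)))
    (hcond1 : β * P qs / qs + (1-β) * deriv P qs - deriv h qs = θ₁)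
    (hcond2 : deriv (fun z =>
        (z - deriv C qs) * (1 - F (β * P qs / qs + (1-β) * z - deriv h qs)))
        (deriv P qs) = 0) :
    deriv P qs = deriv C qs := by
  set a := β * P qs / qs
  set b := deriv h qs
  set z₀ := deriv P qs
  -- derivative of the inner function
  have hinner : HasDerivAt (fun z => a + (1-β) * z - b) (1-β) z₀ := by
    simpa using (((hasDerivAt_id z₀).const_mul (1-β)).const_add a).sub_const b
  have hFc : HasDerivAt (fun z => F (a + (1-β) * z - b))
      (f (a + (1-β) * z₀ - b) * (1-β)) z₀ :=
    (hF _).comp z₀ hinner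
  have hg : HasDerivAt (fun z => (z - deriv C qs) * (1 - F (a + (1-β) * z - b)))
      (1 * (1 - F (a + (1-β) * z₀ - b)) +
        (z₀ - deriv C qs) * (0 - f (a + (1-β) * z₀ - b) * (1-β))) z₀ := by
    exact ((hasDerivAt_id z₀).sub_const _).mul ((hasDerivAt_const z₀ 1).sub hFc)
  have hd := hg.deriv
  rw [hcond2] at hd
  rw [hcond1, hF1] at hd
  have h1β : 1 - β > 0 := by
    rcases hβ with ⟨_, hle⟩
    cases lt_or_eq_of_le hle with
    | inl hlt => linarith
    | inr heq => exact absurd heq hβ1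
  have : (z₀ - deriv C qs) * (f θ₁ * (1-β)) = 0 := by linarith
  have hne : f θ₁ * (1-β) ≠ 0 := by positivity
  have := mul_eq_zero.mp this
  rcases this with h0 | h0
  · linarith
  · exact absurd h0 hne
end
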